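/- Suppose n ≥ 2 and the variance assumption holds: max_{1≤i≤n} E‖ε_i‖_H² ≤ V < ∞. For any y > 0 there exists an event Ω₂ with P(Ω₂) ≥ 1 − 1/y² on which the following holds: for any δ ∈ (0, Λ̲_{τ*}] and any minimizer τ̂ of the empirical risk R̂_n(τ) over the segmentations τ ∈ T_n with exactly D_{τ*} segments and Λ̲_τ ≥ δ, if v₂(y,δ) := 24 D_{τ*}² (Δ̄ √V / Δ̲²) · y/√n + 8 D_{τ*} (V/Δ̲²) · y²/(n δ) ≤ Λ̲_{τ*}, then (1/n) d∞^{(1)}(τ*, τ̂) ≤ v₂(y,δ). -/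

import Mathlib

open MeasureTheory ProbabilityTheory

/-- A segmentation of `{1, …, n}` with `D` segments: integers
`0 = t 0 < t 1 < ⋯ < t D = n`. -/
structure Seg (n : ℕ) where
  D : ℕ
  t : ℕ → ℕ
  hD : 0 < D
  h0 : t 0 = 0
  hn : t D = n
  hmono : ∀ ℓ < D, t ℓ < t (ℓ + 1)

namespace Seg

variable {n : ℕ}

/-- The `ℓ`-th segment (`0`-based) of a segmentation, as a set of `0`-based indices:
it corresponds to the paper's segment `λ_{ℓ+1} = {t ℓ + 1, …, t (ℓ+1)}` (1-based). -/
def seg (τ : Seg n) (ℓ : ℕ) : Finset (Fin n) :=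
  Finset.univ.filter fun j => τ.t ℓ ≤ (j : ℕ) ∧ (j : ℕ) < τ.t (ℓ + 1)

/-- `Λ̲_τ`: normalized size of the smallest segment. -/
noncomputable def lamMin (τ : Seg n) : ℝ :=
  (((Finset.range τ.D).inf' (Finset.nonempty_range_iff.mpr τ.hD.ne')
      fun ℓ => τ.t (ℓ + 1) - τ.t ℓ : ℕ) : ℝ) / n

/-- `Λ̄_τ`: normalized size of the largest segment. -/
noncomputable def lamMax (τ : Seg n) : ℝ :=
  (((Finset.range τ.D).sup' (Finset.nonempty_range_iff.mpr τ.hD.ne')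
      fun ℓ => τ.t (ℓ + 1) - τ.t ℓ : ℕ) : ℝ) / n

/-- `d∞^{(1)}(τ¹,τ²) = max_{1 ≤ i ≤ D₁−1} min_{1 ≤ j ≤ D₂−1} |τ¹_i − τ²_j|`
(with natural conventions in the degenerate cases where a segmentation has no
interior change-point). -/
noncomputable def dinf1 (τ1 τ2 : Seg n) : ℕ :=
  if h : 2 ≤ τ1.D ∧ 2 ≤ τ2.D then
    (Finset.Ioo 0 τ1.D).sup fun i =>
      (Finset.Ioo 0 τ2.D).inf' ⟨1, Finset.mem_Ioo.mpr ⟨Nat.one_pos, by omega⟩⟩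
        fun j => Nat.dist (τ1.t i) (τ2.t j)
  else if τ1.D = τ2.D then 0 else n

/-- `d∞^{(2)}(τ¹,τ²) = max_{1 ≤ i ≤ D₁−1} min_{0 ≤ j ≤ D₂} |τ¹_i − τ²_j|`. -/
noncomputable def dinf2 (τ1 τ2 : Seg n) : ℕ :=
  (Finset.Ioo 0 τ1.D).sup fun i =>
    (Finset.Icc 0 τ2.D).inf' ⟨0, Finset.mem_Icc.mpr ⟨le_rfl, Nat.zero_le _⟩⟩
      fun j => Nat.dist (τ1.t i) (τ2.t j)

/-- `d∞^{(3)}(τ¹,τ²) = max_{1 ≤ i ≤ D₁−1} |τ¹_i − τ²_i|` (meaningful when `D₁ = D₂`). -/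
noncomputable def dinf3 (τ1 τ2 : Seg n) : ℕ :=
  (Finset.Ioo 0 τ1.D).sup fun i => Nat.dist (τ1.t i) (τ2.t i)

/-- `d_H^{(1)}`. -/
noncomputable def dH1 (τ1 τ2 : Seg n) : ℕ := max (dinf1 τ1 τ2) (dinf1 τ2 τ1)

/-- `d_H^{(2)}`. -/
noncomputable def dH2 (τ1 τ2 : Seg n) : ℕ := max (dinf2 τ1 τ2) (dinf2 τ2 τ1)

/-- The matrix of the orthogonal projection `Π_τ`:
`(Π_τ)_{ij} = 1/|λ|` if `i, j` are in the same segment `λ` of `τ`, and `0` otherwise. -/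
noncomputable def Pmat (τ : Seg n) : Fin n → Fin n → ℝ := fun i j =>
  ∑ ℓ ∈ Finset.range τ.D, if i ∈ τ.seg ℓ ∧ j ∈ τ.seg ℓ then ((τ.seg ℓ).card : ℝ)⁻¹ else 0

/-- The Frobenius loss `d_F(τ¹,τ²) = ‖Π_{τ¹} − Π_{τ²}‖_F`. -/
noncomputable def dF (τ1 τ2 : Seg n) : ℝ :=
  Real.sqrt (∑ i, ∑ j, (Pmat τ1 i j - Pmat τ2 i j) ^ 2)

/-- The orthogonal projection `Π_τ : H^n → H^n` onto vectors constant on each segment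
of `τ`: `(Π_τ x)_i` is the average of `x` over the segment of `τ` containing `i`. -/
noncomputable def proj {H : Type*} [AddCommGroup H] [Module ℝ H]
    (τ : Seg n) (x : Fin n → H) : Fin n → H := fun i =>
  ∑ ℓ ∈ Finset.range τ.D,
    if τ.t ℓ ≤ (i : ℕ) ∧ (i : ℕ) < τ.t (ℓ + 1)
    then (((τ.t (ℓ + 1) - τ.t ℓ : ℕ) : ℝ))⁻¹ • ∑ j ∈ τ.seg ℓ, x j
    else 0

end Seg

/-- Squared norm on `H^n`: `‖x‖² = Σ_i ‖x_i‖²`. -/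
noncomputable def hnorm2 {n : ℕ} {H : Type*} [NormedAddCommGroup H] (x : Fin n → H) : ℝ :=
  ∑ i, ‖x i‖ ^ 2

/-- Inner product on `H^n`: `⟨x, y⟩ = Σ_i ⟨x_i, y_i⟩_H`. -/
noncomputable def hinner {n : ℕ} {H : Type*} [NormedAddCommGroup H] [InnerProductSpace ℝ H]
    (x y : Fin n → H) : ℝ := ∑ i, inner ℝ (x i) (y i)

/-- `τ` is the true segmentation of `m ∈ H^n`: `m` is constant on every segment of `τ`
and jumps at every interior change-point of `τ`. -/
def IsTrueSeg {n : ℕ} {H : Type*} (τ : Seg n) (m : Fin n → H) : Prop :=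
  (∀ ℓ < τ.D, ∀ i ∈ τ.seg ℓ, ∀ j ∈ τ.seg ℓ, m i = m j) ∧
  ∀ ℓ, 0 < ℓ → ℓ < τ.D → ∀ (h1 : τ.t ℓ - 1 < n) (h2 : τ.t ℓ < n),
    m ⟨τ.t ℓ - 1, h1⟩ ≠ m ⟨τ.t ℓ, h2⟩

/-- The size `‖μ*_{t ℓ + 1} − μ*_{t ℓ}‖` (paper indexing) of the jump of `m` at
the change-point `t ℓ` of `τ`. -/
noncomputable def jumpAt {n : ℕ} {H : Type*} [NormedAddCommGroup H]
    (τ : Seg n) (m : Fin n → H) (ℓ : ℕ) : ℝ :=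
  if h : 0 < τ.t ℓ ∧ τ.t ℓ < n then ‖m ⟨τ.t ℓ, h.2⟩ - m ⟨τ.t ℓ - 1, by omega⟩‖ else 0

/-- `Δ̲`: size of the smallest jump of `m` (over the change-points of `τ`). -/
noncomputable def deltaMin {n : ℕ} {H : Type*} [NormedAddCommGroup H]
    (τ : Seg n) (m : Fin n → H) : ℝ :=
  if h : 2 ≤ τ.D then
    (Finset.Ioo 0 τ.D).inf' ⟨1, Finset.mem_Ioo.mpr ⟨Nat.one_pos, by omega⟩⟩ (jumpAt τ m)
  else 0

/-- `Δ̄`: size of the largest jump of `m` (over the change-points of `τ`). -/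
noncomputable def deltaMax {n : ℕ} {H : Type*} [NormedAddCommGroup H]
    (τ : Seg n) (m : Fin n → H) : ℝ :=
  if h : 2 ≤ τ.D then
    (Finset.Ioo 0 τ.D).sup' ⟨1, Finset.mem_Ioo.mpr ⟨Nat.one_pos, by omega⟩⟩ (jumpAt τ m)
  else 0

/-- The value of `m` at the first index of the `ℓ`-th segment of `τ`; if `m` is constant
on each segment of `τ`, this is the common value `μ*_{λ_ℓ}` of `m` on that segment. -/
noncomputable def segVal {n : ℕ} {H : Type*} [AddCommGroup H]
    (τ : Seg n) (m : Fin n → H) (ℓ : ℕ) : H :=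
  if h : τ.t ℓ < n then m ⟨τ.t ℓ, h⟩ else 0

/-- `M_n = max_{1 ≤ k ≤ n} ‖ε_1 + ⋯ + ε_k‖` (the value at `k = 0` is `0`, which does not
affect the maximum). -/
noncomputable def Mmax {n : ℕ} {H : Type*} [NormedAddCommGroup H] (ε : Fin n → H) : ℝ :=
  (Finset.range (n + 1)).sup' (Finset.nonempty_range_iff.mpr (Nat.succ_ne_zero n))
    fun k => ‖∑ j ∈ Finset.univ.filter (fun j : Fin n => (j : ℕ) < k), ε j‖


/-!
The least-squares segmentation `τ̂` satisfies the basic inequality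
`‖Y - Π_τ̂ Y‖² ≤ ‖Y - Π_τ* Y‖²`. Writing `Y = μ* + ε` and using that `Π_τ` is an orthogonal
projection with `Π_τ* μ* = μ*`, this bounds the approximation error `‖μ* - Π_τ̂ μ*‖²` by the cross
term `-2⟨μ* - Π_τ̂ μ*, ε⟩` plus the projected noise `‖Π_τ̂ ε‖²`. Both only involve sums of `ε` over
segments, hence are controlled by `M = max_k ‖ε_1 + ⋯ + ε_k‖`: the cross term by `8 D² Δ̄ M`
(after subtracting `μ*_1`, the mean is bounded by `(D - 1) Δ̄`), and the projected noise by
`D (2M)² / (nδ)` since every segment of `τ̂` has at least `nδ` points.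

Conversely, if a true change-point is at distance at least `m ≤ n Λ̲_τ*` from every change-point
of `τ̂`, then `Π_τ̂ μ*` is constant on `m` points on each side of it, where `μ*` jumps by at least
`Δ̲`; hence `‖μ* - Π_τ̂ μ*‖² ≥ m Δ̲² / 2` for `m = min (d∞(τ*, τ̂), n Λ̲_τ*)`.

Kolmogorov's maximal inequality, whose proof works verbatim in a Hilbert space, gives
`M ≤ y √(nV)` with probability at least `1 - 1/y²`. Comparing the two bounds, the constant
`24 > 16` in `v₂` leaves room to exclude `m = n Λ̲_τ*` when `v₂ ≤ Λ̲_τ*`, so `d∞(τ*, τ̂) ≤ n v₂`.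
-/

open Finset RealInnerProductSpace

def finIco (n a b : ℕ) : Finset (Fin n) :=
  univ.filter fun j => a ≤ (j : ℕ) ∧ (j : ℕ) < b

@[simp] lemma mem_finIco {n a b : ℕ} {j : Fin n} :
    j ∈ finIco n a b ↔ a ≤ (j : ℕ) ∧ (j : ℕ) < b := by
  simp [finIco]

lemma card_finIco {n a b : ℕ} (hb : b ≤ n) : (finIco n a b).card = b - a := by
  have h : ∀ m ∈ Ico a b, m < n := fun m hm => (mem_Ico.1 hm).2.trans_le hb
  rw [show finIco n a b = (Ico a b).attachFin h by ext j; simp, card_attachFin, Nat.card_Ico]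

/-- `Mmax x` is the maximum of `‖partialSum x k‖` over `k ≤ n`. -/
def partialSum {E : Type*} [AddCommMonoid E] {n : ℕ} (x : Fin n → E) (k : ℕ) : E :=
  ∑ j ∈ univ.filter (fun j : Fin n => (j : ℕ) < k), x j

lemma partialSum_add_sum_filter_le {E : Type*} [AddCommMonoid E] {n : ℕ} (x : Fin n → E)
    (k : ℕ) :
    partialSum x k + ∑ j ∈ univ.filter (fun j : Fin n => k ≤ (j : ℕ)), x j = ∑ j, x j := by
  simp_rw [← not_lt]
  exact sum_filter_add_sum_filter_not _ _ _

lemma norm_partialSum_le_Mmax {n : ℕ} {H : Type*} [NormedAddCommGroup H] (x : Fin n → H)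
    {k : ℕ} (hk : k ≤ n) : ‖partialSum x k‖ ≤ Mmax x :=
  le_sup' (fun k => ‖partialSum x k‖) (mem_range.2 (Nat.lt_succ_of_le hk))

lemma Mmax_nonneg {n : ℕ} {H : Type*} [NormedAddCommGroup H] (x : Fin n → H) : 0 ≤ Mmax x :=
  (norm_nonneg _).trans (norm_partialSum_le_Mmax x (Nat.zero_le n))

namespace Seg

variable {n : ℕ} (τ : Seg n)

def len (ℓ : ℕ) : ℕ := τ.t (ℓ + 1) - τ.t ℓ

def minLen : ℕ := (range τ.D).inf' (nonempty_range_iff.mpr τ.hD.ne') τ.len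

def IsConstOn {α : Type*} (x : Fin n → α) : Prop :=
  ∀ ℓ < τ.D, ∀ i ∈ τ.seg ℓ, ∀ j ∈ τ.seg ℓ, x i = x j

lemma strictMonoOn_t : StrictMonoOn τ.t (Set.Iic τ.D) :=
  strictMonoOn_Iic_of_lt_succ fun m hm => by simpa using τ.hmono m hm

lemma t_lt_t {a b : ℕ} (hab : a < b) (hb : b ≤ τ.D) : τ.t a < τ.t b :=
  τ.strictMonoOn_t (Set.mem_Iic.2 (hab.le.trans hb)) hb hab

lemma t_le_t {a b : ℕ} (hab : a ≤ b) (hb : b ≤ τ.D) : τ.t a ≤ τ.t b :=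
  τ.strictMonoOn_t.monotoneOn (Set.mem_Iic.2 (hab.trans hb)) hb hab

lemma t_le_n {a : ℕ} (ha : a ≤ τ.D) : τ.t a ≤ n := (τ.t_le_t ha le_rfl).trans_eq τ.hn

lemma t_lt_n {a : ℕ} (ha : a < τ.D) : τ.t a < n := (τ.t_lt_t ha le_rfl).trans_eq τ.hn

lemma n_pos (τ : Seg n) : 0 < n := τ.h0 ▸ τ.t_lt_n τ.hD

lemma len_pos {ℓ : ℕ} (hℓ : ℓ < τ.D) : 0 < τ.len ℓ := Nat.sub_pos_of_lt (τ.hmono ℓ hℓ)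

lemma minLen_le_len {ℓ : ℕ} (hℓ : ℓ < τ.D) : τ.minLen ≤ τ.len ℓ :=
  inf'_le _ (mem_range.2 hℓ)

lemma lamMin_eq : τ.lamMin = τ.minLen / n := rfl

@[simp] lemma mem_seg {ℓ : ℕ} {j : Fin n} :
    j ∈ τ.seg ℓ ↔ τ.t ℓ ≤ (j : ℕ) ∧ (j : ℕ) < τ.t (ℓ + 1) := mem_finIco

lemma card_seg {ℓ : ℕ} (hℓ : ℓ < τ.D) : (τ.seg ℓ).card = τ.len ℓ :=
  card_finIco (τ.t_le_n hℓ)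

lemma start_mem_seg {ℓ : ℕ} (hℓ : ℓ < τ.D) : (⟨τ.t ℓ, τ.t_lt_n hℓ⟩ : Fin n) ∈ τ.seg ℓ :=
  τ.mem_seg.2 ⟨le_rfl, τ.hmono ℓ hℓ⟩

lemma exists_mem_seg (i : Fin n) : ∃ ℓ < τ.D, i ∈ τ.seg ℓ := by
  have key : ∀ k ≤ τ.D, (i : ℕ) < τ.t k → ∃ ℓ < k, i ∈ τ.seg ℓ := by
    intro k
    induction k with
    | zero => intro _ h; simp [τ.h0] at h
    | succ k ih =>
      intro hk h
      by_cases hc : τ.t k ≤ i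
      · exact ⟨k, k.lt_succ_self, τ.mem_seg.2 ⟨hc, h⟩⟩
      · obtain ⟨ℓ, hℓ, hi⟩ := ih (by omega) (by omega)
        exact ⟨ℓ, by omega, hi⟩
  exact key τ.D le_rfl (τ.hn.symm ▸ i.isLt)

lemma eq_of_mem_seg {ℓ ℓ' : ℕ} {i : Fin n} (hℓ : ℓ < τ.D) (hℓ' : ℓ' < τ.D)
    (hi : i ∈ τ.seg ℓ) (hi' : i ∈ τ.seg ℓ') : ℓ = ℓ' := by
  rw [mem_seg] at hi hi'
  by_contra hne
  rcases Nat.lt_or_gt_of_ne hne with h | h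
  · have := τ.t_le_t (show ℓ + 1 ≤ ℓ' by omega) hℓ'.le; omega
  · have := τ.t_le_t (show ℓ' + 1 ≤ ℓ by omega) hℓ.le; omega

lemma sum_eq_sum_seg {M : Type*} [AddCommMonoid M] (f : Fin n → M) :
    ∑ i, f i = ∑ ℓ ∈ range τ.D, ∑ i ∈ τ.seg ℓ, f i := by
  rw [← sum_biUnion]
  · refine (sum_subset (subset_univ _) fun i _ hi => absurd ?_ hi).symm
    obtain ⟨ℓ, hℓ, hi⟩ := τ.exists_mem_seg i
    exact mem_biUnion.2 ⟨ℓ, mem_range.2 hℓ, hi⟩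
  · intro a ha b hb hab
    exact disjoint_left.2 fun i hia hib =>
      hab (τ.eq_of_mem_seg (mem_range.1 ha) (mem_range.1 hb) hia hib)

lemma sum_seg_eq_partialSum_sub {E : Type*} [AddCommGroup E] (x : Fin n → E) {ℓ : ℕ}
    (hℓ : ℓ < τ.D) :
    ∑ j ∈ τ.seg ℓ, x j = partialSum x (τ.t (ℓ + 1)) - partialSum x (τ.t ℓ) := by
  have hsub : univ.filter (fun j : Fin n => (j : ℕ) < τ.t ℓ)
      ⊆ univ.filter (fun j : Fin n => (j : ℕ) < τ.t (ℓ + 1)) := fun j hj => by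
    simp only [mem_filter, mem_univ, true_and] at hj ⊢
    exact hj.trans (τ.hmono ℓ hℓ)
  rw [partialSum, partialSum, ← sum_sdiff_eq_sub hsub]
  congr 1
  ext j
  simp only [mem_seg, mem_sdiff, mem_filter, mem_univ, true_and, not_lt]
  tauto

lemma norm_sum_seg_le {H : Type*} [NormedAddCommGroup H] (x : Fin n → H) {ℓ : ℕ}
    (hℓ : ℓ < τ.D) : ‖∑ j ∈ τ.seg ℓ, x j‖ ≤ 2 * Mmax x := by
  rw [τ.sum_seg_eq_partialSum_sub x hℓ, two_mul]
  exact (norm_sub_le _ _).trans (add_le_add (norm_partialSum_le_Mmax x (τ.t_le_n hℓ))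
    (norm_partialSum_le_Mmax x (τ.t_le_n hℓ.le)))

lemma eq_segVal_of_mem_seg {E : Type*} [AddCommGroup E] {x : Fin n → E} (hx : τ.IsConstOn x)
    {ℓ : ℕ} (hℓ : ℓ < τ.D) {i : Fin n} (hi : i ∈ τ.seg ℓ) : x i = segVal τ x ℓ := by
  rw [segVal, dif_pos (τ.t_lt_n hℓ)]
  exact hx ℓ hℓ i hi _ (τ.start_mem_seg hℓ)

section Module

variable {E : Type*} [AddCommGroup E] [Module ℝ E]

lemma proj_apply_of_mem_seg (x : Fin n → E) {ℓ : ℕ} (hℓ : ℓ < τ.D) {i : Fin n}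
    (hi : i ∈ τ.seg ℓ) : τ.proj x i = ((τ.len ℓ : ℕ) : ℝ)⁻¹ • ∑ j ∈ τ.seg ℓ, x j := by
  unfold proj
  rw [sum_eq_single_of_mem ℓ (mem_range.2 hℓ), if_pos (τ.mem_seg.1 hi)]
  · rfl
  · intro b hb hbℓ
    exact if_neg fun h => hbℓ (τ.eq_of_mem_seg (mem_range.1 hb) hℓ (τ.mem_seg.2 h) hi)

lemma card_seg_nsmul_inv_len_smul {ℓ : ℕ} (hℓ : ℓ < τ.D) (v : E) :
    (τ.seg ℓ).card • (((τ.len ℓ : ℕ) : ℝ)⁻¹ • v) = v := by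
  rw [τ.card_seg hℓ, ← Nat.cast_smul_eq_nsmul ℝ, smul_smul,
    mul_inv_cancel₀ (Nat.cast_ne_zero.2 (τ.len_pos hℓ).ne'), one_smul]

lemma sum_proj_seg (x : Fin n → E) {ℓ : ℕ} (hℓ : ℓ < τ.D) :
    ∑ j ∈ τ.seg ℓ, τ.proj x j = ∑ j ∈ τ.seg ℓ, x j := by
  rw [sum_congr rfl fun j hj => τ.proj_apply_of_mem_seg x hℓ hj, sum_const,
    τ.card_seg_nsmul_inv_len_smul hℓ]

lemma proj_sub (x y : Fin n → E) : τ.proj (x - y) = τ.proj x - τ.proj y := by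
  ext i
  obtain ⟨ℓ, hℓ, hi⟩ := τ.exists_mem_seg i
  simp only [Pi.sub_apply, τ.proj_apply_of_mem_seg _ hℓ hi, sum_sub_distrib, smul_sub]

lemma proj_eq_self {x : Fin n → E} (hx : τ.IsConstOn x) : τ.proj x = x := by
  ext i
  obtain ⟨ℓ, hℓ, hi⟩ := τ.exists_mem_seg i
  rw [τ.proj_apply_of_mem_seg x hℓ hi, sum_congr rfl fun j hj => (hx ℓ hℓ i hi j hj).symm,
    sum_const, smul_comm, τ.card_seg_nsmul_inv_len_smul hℓ]

lemma proj_const (a : E) : τ.proj (fun _ => a) = fun _ => a :=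
  τ.proj_eq_self fun _ _ _ _ _ _ => rfl

lemma isConstOn_proj (x : Fin n → E) : τ.IsConstOn (τ.proj x) := fun _ hℓ i hi j hj => by
  rw [τ.proj_apply_of_mem_seg x hℓ hi, τ.proj_apply_of_mem_seg x hℓ hj]

end Module

variable {H : Type*} [NormedAddCommGroup H] [InnerProductSpace ℝ H]

lemma hinner_eq_sum_segVal {y : Fin n → H} (hy : τ.IsConstOn y) (x : Fin n → H) :
    hinner y x = ∑ ℓ ∈ range τ.D, ⟪segVal τ y ℓ, ∑ j ∈ τ.seg ℓ, x j⟫ := by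
  rw [hinner, τ.sum_eq_sum_seg]
  refine sum_congr rfl fun ℓ hℓ => ?_
  rw [inner_sum]
  exact sum_congr rfl fun i hi => by rw [τ.eq_segVal_of_mem_seg hy (mem_range.1 hℓ) hi]

lemma hinner_proj_sub_proj (x y : Fin n → H) : hinner (τ.proj y) (x - τ.proj x) = 0 := by
  rw [τ.hinner_eq_sum_segVal (τ.isConstOn_proj y)]
  refine sum_eq_zero fun ℓ hℓ => ?_
  rw [sum_congr rfl fun j _ => Pi.sub_apply x (τ.proj x) j, sum_sub_distrib,
    τ.sum_proj_seg x (mem_range.1 hℓ), sub_self, inner_zero_right]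

lemma hnorm2_proj (x : Fin n → H) :
    hnorm2 (τ.proj x) = ∑ ℓ ∈ range τ.D, ((τ.len ℓ : ℕ) : ℝ)⁻¹ * ‖∑ j ∈ τ.seg ℓ, x j‖ ^ 2 := by
  rw [hnorm2, τ.sum_eq_sum_seg]
  refine sum_congr rfl fun ℓ hℓ => ?_
  have hlen : (0 : ℝ) < τ.len ℓ := Nat.cast_pos.2 (τ.len_pos (mem_range.1 hℓ))
  rw [sum_congr rfl fun i hi => by rw [τ.proj_apply_of_mem_seg x (mem_range.1 hℓ) hi],
    sum_const, τ.card_seg (mem_range.1 hℓ), nsmul_eq_mul, norm_smul, mul_pow, norm_inv,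
    Real.norm_natCast]
  field_simp

lemma abs_hinner_le_of_isConstOn {w : Fin n → H} (hw : τ.IsConstOn w) {W : ℝ}
    (hW : ∀ i, ‖w i‖ ≤ W) (x : Fin n → H) : |hinner w x| ≤ τ.D * (W * (2 * Mmax x)) := by
  rw [τ.hinner_eq_sum_segVal hw]
  refine (abs_sum_le_sum_abs _ _).trans ?_
  have hterm : ∀ ℓ ∈ range τ.D, |⟪segVal τ w ℓ, ∑ j ∈ τ.seg ℓ, x j⟫| ≤ W * (2 * Mmax x) := by
    intro ℓ hℓ
    have hval : ‖segVal τ w ℓ‖ ≤ W := by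
      rw [segVal, dif_pos (τ.t_lt_n (mem_range.1 hℓ))]; exact hW _
    exact (abs_real_inner_le_norm _ _).trans (mul_le_mul hval (τ.norm_sum_seg_le x
      (mem_range.1 hℓ)) (norm_nonneg _) ((norm_nonneg _).trans hval))
  simpa using sum_le_card_nsmul _ _ _ hterm

lemma norm_proj_le {x : Fin n → H} {W : ℝ} (hW : ∀ i, ‖x i‖ ≤ W) (i : Fin n) :
    ‖τ.proj x i‖ ≤ W := by
  obtain ⟨ℓ, hℓ, hi⟩ := τ.exists_mem_seg i
  have hlen : (0 : ℝ) < τ.len ℓ := Nat.cast_pos.2 (τ.len_pos hℓ)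
  rw [τ.proj_apply_of_mem_seg x hℓ hi, norm_smul, norm_inv, Real.norm_natCast,
    inv_mul_le_iff₀ hlen]
  calc ‖∑ j ∈ τ.seg ℓ, x j‖ ≤ ∑ j ∈ τ.seg ℓ, ‖x j‖ := norm_sum_le _ _
    _ ≤ (τ.seg ℓ).card • W := sum_le_card_nsmul _ _ _ fun j _ => hW j
    _ = τ.len ℓ * W := by rw [τ.card_seg hℓ, nsmul_eq_mul]

lemma hnorm2_proj_le (x : Fin n → H) {δ : ℝ} (hδ : 0 < δ) (hδτ : δ ≤ τ.lamMin) :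
    hnorm2 (τ.proj x) ≤ τ.D * (2 * Mmax x) ^ 2 / (n * δ) := by
  have hnδ : (0 : ℝ) < n * δ := mul_pos (Nat.cast_pos.2 τ.n_pos) hδ
  have hterm : ∀ ℓ ∈ range τ.D,
      ((τ.len ℓ : ℕ) : ℝ)⁻¹ * ‖∑ j ∈ τ.seg ℓ, x j‖ ^ 2 ≤ (2 * Mmax x) ^ 2 / (n * δ) := by
    intro ℓ hℓ
    have hlen : n * δ ≤ τ.len ℓ := by
      rw [lamMin_eq, le_div_iff₀ (Nat.cast_pos.2 τ.n_pos)] at hδτ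
      linarith [(Nat.cast_le (α := ℝ)).2 (τ.minLen_le_len (mem_range.1 hℓ))]
    rw [div_eq_inv_mul]
    exact mul_le_mul (inv_anti₀ hnδ hlen) (pow_le_pow_left₀ (norm_nonneg _)
      (τ.norm_sum_seg_le x (mem_range.1 hℓ)) 2) (by positivity) (by positivity)
  rw [τ.hnorm2_proj, mul_div_assoc]
  simpa using sum_le_card_nsmul _ _ _ hterm

end Seg

section Risk

variable {n : ℕ} {H : Type*} [NormedAddCommGroup H]

lemma hnorm2_nonneg (x : Fin n → H) : 0 ≤ hnorm2 x := sum_nonneg fun _ _ => sq_nonneg _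

lemma hnorm2_eq_norm_sq (x : Fin n → H) : hnorm2 x = ‖WithLp.toLp 2 x‖ ^ 2 := by
  simp [hnorm2, PiLp.norm_sq_eq_of_L2]

variable [InnerProductSpace ℝ H]

lemma hinner_eq_inner (x y : Fin n → H) : hinner x y = ⟪WithLp.toLp 2 x, WithLp.toLp 2 y⟫ := by
  simp [hinner, PiLp.inner_apply]

lemma hinner_sub_left (x y z : Fin n → H) : hinner (x - y) z = hinner x z - hinner y z := by
  simp only [hinner_eq_inner, WithLp.toLp_sub, inner_sub_left]

/-- Pythagoras for the decomposition `x - Π x = (μ - Π μ) + (e - Π e)` with `e = x - μ`. -/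
lemma Seg.hnorm2_sub_proj (τ : Seg n) (μ x : Fin n → H) :
    hnorm2 (x - τ.proj x) = hnorm2 (μ - τ.proj μ) + 2 * hinner (μ - τ.proj μ) (x - μ)
      + hnorm2 (x - μ) - hnorm2 (τ.proj (x - μ)) := by
  have hx : x - τ.proj x = (μ - τ.proj μ) + ((x - μ) - τ.proj (x - μ)) := by
    rw [← sub_add_cancel (τ.proj x) (τ.proj μ), ← τ.proj_sub]; abel
  have h1 := τ.hinner_proj_sub_proj μ (x - μ)
  have h2 := τ.hinner_proj_sub_proj (x - μ) (x - μ)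
  rw [hx]
  simp only [hnorm2_eq_norm_sq, hinner_eq_inner, WithLp.toLp_add,
    WithLp.toLp_sub 2 (x - μ)] at h1 h2 ⊢
  generalize WithLp.toLp 2 (μ - τ.proj μ) = u at *
  generalize WithLp.toLp 2 (τ.proj (x - μ)) = p at *
  generalize WithLp.toLp 2 (x - μ) = f at *
  rw [inner_sub_right, real_inner_self_eq_norm_sq] at h2
  rw [norm_add_sq_real, inner_sub_right, norm_sub_sq_real, real_inner_comm p u,
    real_inner_comm p f] at *
  linarith

end Risk

section Jumps

variable {n : ℕ} {H : Type*} [NormedAddCommGroup H] {τ : Seg n} {μ : Fin n → H}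

lemma deltaMin_le_jumpAt (hD : 2 ≤ τ.D) {ℓ : ℕ} (h0 : 0 < ℓ) (hℓ : ℓ < τ.D) :
    deltaMin τ μ ≤ jumpAt τ μ ℓ := by
  rw [deltaMin, dif_pos hD]
  exact inf'_le _ (mem_Ioo.2 ⟨h0, hℓ⟩)

lemma jumpAt_le_deltaMax (hD : 2 ≤ τ.D) {ℓ : ℕ} (h0 : 0 < ℓ) (hℓ : ℓ < τ.D) :
    jumpAt τ μ ℓ ≤ deltaMax τ μ := by
  rw [deltaMax, dif_pos hD]
  exact le_sup' (jumpAt τ μ) (mem_Ioo.2 ⟨h0, hℓ⟩)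

lemma deltaMin_le_deltaMax (hD : 2 ≤ τ.D) : deltaMin τ μ ≤ deltaMax τ μ :=
  (deltaMin_le_jumpAt hD one_pos (by omega)).trans (jumpAt_le_deltaMax hD one_pos (by omega))

lemma deltaMax_nonneg (τ : Seg n) (μ : Fin n → H) : 0 ≤ deltaMax τ μ := by
  unfold deltaMax
  split_ifs with hD
  · refine le_trans ?_ (le_sup' (jumpAt τ μ) (mem_Ioo.2 ⟨one_pos, hD⟩))
    unfold jumpAt; split_ifs <;> simp
  · rfl

end Jumps

namespace IsTrueSeg

variable {n : ℕ} {H : Type*} [NormedAddCommGroup H] {τ : Seg n} {μ : Fin n → H}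

lemma jumpAt_eq (hτ : IsTrueSeg τ μ) {ℓ : ℕ} (h0 : 0 < ℓ) (hℓ : ℓ < τ.D) :
    jumpAt τ μ ℓ = ‖segVal τ μ ℓ - segVal τ μ (ℓ - 1)‖ := by
  have hprev := τ.t_lt_t (Nat.sub_lt h0 one_pos) hℓ.le
  have hpos : 0 < τ.t ℓ := τ.h0 ▸ τ.t_lt_t h0 hℓ.le
  have hlt := τ.t_lt_n hℓ
  have hmem : (⟨τ.t ℓ - 1, by omega⟩ : Fin n) ∈ τ.seg (ℓ - 1) := by
    rw [Seg.mem_seg, Nat.sub_add_cancel h0]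
    exact ⟨Nat.le_sub_one_of_lt hprev, Nat.sub_lt hpos one_pos⟩
  rw [jumpAt, dif_pos ⟨hpos, hlt⟩, τ.eq_segVal_of_mem_seg hτ.1 (by omega) hmem,
    τ.eq_segVal_of_mem_seg hτ.1 hℓ (τ.start_mem_seg hℓ)]

lemma jumpAt_pos (hτ : IsTrueSeg τ μ) {ℓ : ℕ} (h0 : 0 < ℓ) (hℓ : ℓ < τ.D) :
    0 < jumpAt τ μ ℓ := by
  have hpos : 0 < τ.t ℓ := τ.h0 ▸ τ.t_lt_t h0 hℓ.le
  rw [jumpAt, dif_pos ⟨hpos, τ.t_lt_n hℓ⟩, norm_sub_pos_iff]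
  exact (hτ.2 ℓ h0 hℓ _ _).symm

lemma deltaMin_pos (hτ : IsTrueSeg τ μ) (hD : 2 ≤ τ.D) : 0 < deltaMin τ μ := by
  rw [deltaMin, dif_pos hD]
  exact (lt_inf'_iff _).2 fun ℓ hℓ => hτ.jumpAt_pos (mem_Ioo.1 hℓ).1 (mem_Ioo.1 hℓ).2

lemma norm_sub_segVal_zero_le (hτ : IsTrueSeg τ μ) (i : Fin n) :
    ‖μ i - segVal τ μ 0‖ ≤ (τ.D - 1) * deltaMax τ μ := by
  obtain ⟨ℓ, hℓ, hi⟩ := τ.exists_mem_seg i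
  rw [τ.eq_segVal_of_mem_seg hτ.1 hℓ hi, ← dist_eq_norm, dist_comm]
  have hstep : ∀ k ∈ range ℓ, dist (segVal τ μ k) (segVal τ μ (k + 1)) ≤ deltaMax τ μ := by
    intro k hk
    have hk1 : k + 1 < τ.D := by have := mem_range.1 hk; omega
    have hjump := hτ.jumpAt_eq (Nat.succ_pos k) hk1
    rw [Nat.succ_sub_one] at hjump
    rw [dist_comm, dist_eq_norm, ← hjump]
    exact jumpAt_le_deltaMax (by omega) (Nat.succ_pos k) hk1
  calc dist (segVal τ μ 0) (segVal τ μ ℓ)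
      ≤ ∑ k ∈ range ℓ, dist (segVal τ μ k) (segVal τ μ (k + 1)) := dist_le_range_sum_dist _ ℓ
    _ ≤ ℓ * deltaMax τ μ := by simpa using sum_le_card_nsmul _ _ _ hstep
    _ ≤ (τ.D - 1) * deltaMax τ μ := by
        gcongr
        · exact deltaMax_nonneg τ μ
        · have : (ℓ : ℝ) + 1 ≤ τ.D := by exact_mod_cast hℓ
          linarith

end IsTrueSeg

section UpperBound

variable {n : ℕ} {H : Type*} [NormedAddCommGroup H] [InnerProductSpace ℝ H]
  {τs τh : Seg n} {μ : Fin n → H}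

lemma IsTrueSeg.abs_hinner_sub_proj_le (hτ : IsTrueSeg τs μ) (hDh : τh.D = τs.D)
    (e : Fin n → H) :
    |hinner (μ - τh.proj μ) e| ≤ 4 * τs.D ^ 2 * deltaMax τs μ * Mmax e := by
  set w : Fin n → H := μ - fun _ => segVal τs μ 0
  have hw : μ - τh.proj μ = w - τh.proj w := by
    simp only [w, τh.proj_sub, τh.proj_const, sub_sub_sub_cancel_right]
  have hW : ∀ i, ‖w i‖ ≤ (τs.D - 1) * deltaMax τs μ := hτ.norm_sub_segVal_zero_le
  have hws : τs.IsConstOn w := fun ℓ hℓ i hi j hj => by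
    simp only [w, Pi.sub_apply, hτ.1 ℓ hℓ i hi j hj]
  have h1 := τs.abs_hinner_le_of_isConstOn hws hW e
  have h2 := τh.abs_hinner_le_of_isConstOn (τh.isConstOn_proj w) (τh.norm_proj_le hW) e
  rw [hDh] at h2
  have hDM : 0 ≤ deltaMax τs μ * Mmax e :=
    mul_nonneg (deltaMax_nonneg τs μ) (Mmax_nonneg e)
  rw [hw, hinner_sub_left]
  calc |hinner w e - hinner (τh.proj w) e| ≤ |hinner w e| + |hinner (τh.proj w) e| :=
        abs_sub _ _
    _ ≤ 4 * (τs.D * (τs.D - 1)) * (deltaMax τs μ * Mmax e) := by linarith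
    _ ≤ 4 * τs.D ^ 2 * deltaMax τs μ * Mmax e := by nlinarith

/-- The basic inequality of least squares, with the cross term and the projected noise bounded
through the partial sums of the noise. -/
theorem IsTrueSeg.hnorm2_sub_proj_le_of_risk_le (hτ : IsTrueSeg τs μ) (hDh : τh.D = τs.D)
    (x : Fin n → H) {δ : ℝ} (hδ : 0 < δ) (hδh : δ ≤ τh.lamMin)
    (hrisk : hnorm2 (x - τh.proj x) ≤ hnorm2 (x - τs.proj x)) :
    hnorm2 (μ - τh.proj μ)
      ≤ 8 * τs.D ^ 2 * deltaMax τs μ * Mmax (x - μ)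
        + τs.D * (2 * Mmax (x - μ)) ^ 2 / (n * δ) := by
  have hs := τs.hnorm2_sub_proj μ x
  have hzero : hnorm2 (0 : Fin n → H) = 0 ∧ hinner 0 (x - μ) = 0 := by simp [hnorm2, hinner]
  rw [τs.proj_eq_self hτ.1, sub_self, hzero.1, hzero.2] at hs
  have hh := τh.hnorm2_sub_proj μ x
  have hcross := (abs_le.1 (hτ.abs_hinner_sub_proj_le hDh (x - μ))).1
  have hproj := τh.hnorm2_proj_le (x - μ) hδ hδh
  rw [hDh] at hproj
  linarith [hnorm2_nonneg (τs.proj (x - μ))]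

end UpperBound

section LowerBound

variable {n : ℕ}

lemma Seg.exists_dinf1_le {τ1 τ2 : Seg n} (h1 : 2 ≤ τ1.D) (h2 : 2 ≤ τ2.D) :
    ∃ i, 0 < i ∧ i < τ1.D ∧
      ∀ j, 0 < j → j < τ2.D → Seg.dinf1 τ1 τ2 ≤ Nat.dist (τ1.t i) (τ2.t j) := by
  obtain ⟨i, hi, hsup⟩ := exists_mem_eq_sup (Ioo 0 τ1.D) ⟨1, mem_Ioo.2 ⟨one_pos, h1⟩⟩
    fun i => (Ioo 0 τ2.D).inf' ⟨1, mem_Ioo.2 ⟨one_pos, h2⟩⟩ fun j => Nat.dist (τ1.t i) (τ2.t j)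
  refine ⟨i, (mem_Ioo.1 hi).1, (mem_Ioo.1 hi).2, fun j hj0 hj => ?_⟩
  rw [Seg.dinf1, dif_pos ⟨h1, h2⟩, hsup]
  exact inf'_le _ (mem_Ioo.2 ⟨hj0, hj⟩)

lemma Seg.exists_finIco_subset_seg (τ : Seg n) {c m : ℕ} (hc : c < n) (hcm : c + m ≤ n)
    (hfar : ∀ j, 0 < j → j < τ.D → m ≤ Nat.dist c (τ.t j)) :
    ∃ ℓ < τ.D, finIco n (c - m) (c + m) ⊆ τ.seg ℓ := by
  obtain ⟨ℓ, hℓ, hcℓ⟩ := τ.exists_mem_seg ⟨c, hc⟩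
  replace hcℓ : τ.t ℓ ≤ c ∧ c < τ.t (ℓ + 1) := τ.mem_seg.1 hcℓ
  have hleft : τ.t ℓ ≤ c - m := by
    rcases Nat.eq_zero_or_pos ℓ with h0 | h0
    · rw [h0, τ.h0]; exact Nat.zero_le _
    · have := hfar ℓ h0 hℓ
      rw [Nat.dist_comm, Nat.dist_eq_sub_of_le hcℓ.1] at this
      omega
  have hright : c + m ≤ τ.t (ℓ + 1) := by
    rcases Nat.lt_or_ge (ℓ + 1) τ.D with h1 | h1
    · have := hfar (ℓ + 1) ℓ.succ_pos h1
      rw [Nat.dist_eq_sub_of_le hcℓ.2.le] at this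
      omega
    · rwa [show ℓ + 1 = τ.D by omega, τ.hn]
  refine ⟨ℓ, hℓ, fun i hi => ?_⟩
  rw [mem_finIco] at hi
  exact τ.mem_seg.2 ⟨by omega, by omega⟩

variable {H : Type*} [NormedAddCommGroup H]

lemma mul_norm_sub_sq_div_two_le_hnorm2 {A B : Finset (Fin n)} (hAB : Disjoint A B) {m : ℕ}
    (hA : A.card = m) (hB : B.card = m) {x : Fin n → H} {p q : H}
    (hp : ∀ i ∈ A, x i = p) (hq : ∀ i ∈ B, x i = q) :
    m * ‖p - q‖ ^ 2 / 2 ≤ hnorm2 x := by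
  have hpq : ‖p - q‖ ^ 2 ≤ 2 * (‖p‖ ^ 2 + ‖q‖ ^ 2) := by
    nlinarith [norm_sub_le p q, norm_nonneg (p - q), sq_nonneg (‖p‖ - ‖q‖)]
  have hsA : ∑ i ∈ A, ‖x i‖ ^ 2 = m * ‖p‖ ^ 2 := by
    rw [sum_congr rfl fun i hi => by rw [hp i hi], sum_const, hA, nsmul_eq_mul]
  have hsB : ∑ i ∈ B, ‖x i‖ ^ 2 = m * ‖q‖ ^ 2 := by
    rw [sum_congr rfl fun i hi => by rw [hq i hi], sum_const, hB, nsmul_eq_mul]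
  have hunion : ∑ i ∈ A ∪ B, ‖x i‖ ^ 2 ≤ hnorm2 x :=
    sum_le_sum_of_subset_of_nonneg (subset_univ _) fun _ _ _ => sq_nonneg _
  rw [sum_union hAB, hsA, hsB] at hunion
  have : (0 : ℝ) ≤ m := m.cast_nonneg
  nlinarith

variable {τs τh : Seg n} {μ : Fin n → H}

/-- `μ` equals `segVal τs μ (k - 1)` on the `m` indices left of `τs.t k` and `segVal τs μ k` on
the `m` indices right of it. -/
lemma IsTrueSeg.mul_norm_segVal_sub_sq_div_two_le (hτ : IsTrueSeg τs μ) {k m : ℕ} (hk0 : 0 < k)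
    (hkD : k < τs.D) (hm : m ≤ τs.minLen) {z : Fin n → H} {a : H}
    (hz : ∀ i ∈ finIco n (τs.t k - m) (τs.t k + m), z i = a) :
    m * ‖segVal τs μ (k - 1) - segVal τs μ k‖ ^ 2 / 2 ≤ hnorm2 (μ - z) := by
  have hk1 : k - 1 + 1 = k := Nat.sub_add_cancel hk0
  have hprev := hm.trans (τs.minLen_le_len (ℓ := k - 1) (by omega))
  have hnext := hm.trans (τs.minLen_le_len hkD)
  rw [Seg.len, hk1] at hprev
  rw [Seg.len] at hnext
  have hcm : τs.t k + m ≤ n := by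
    have := τs.t_le_n (a := k + 1) hkD
    have := τs.hmono k hkD
    omega
  have hbound := mul_norm_sub_sq_div_two_le_hnorm2 (x := μ - z) (m := m)
    (A := finIco n (τs.t k - m) (τs.t k)) (B := finIco n (τs.t k) (τs.t k + m))
    (disjoint_left.2 fun i hi hi' => by simp only [mem_finIco] at hi hi'; omega)
    (by rw [card_finIco (τs.t_lt_n hkD).le]; omega) (by rw [card_finIco hcm]; omega)
    (fun i hi => by
      simp only [mem_finIco] at hi
      rw [Pi.sub_apply, hz i (by simp only [mem_finIco]; omega),
        τs.eq_segVal_of_mem_seg hτ.1 (ℓ := k - 1) (by omega) (by rw [Seg.mem_seg, hk1]; omega)])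
    (fun i hi => by
      simp only [mem_finIco] at hi
      rw [Pi.sub_apply, hz i (by simp only [mem_finIco]; omega),
        τs.eq_segVal_of_mem_seg hτ.1 hkD (by rw [Seg.mem_seg]; omega)])
  simpa only [sub_sub_sub_cancel_right] using hbound

variable [InnerProductSpace ℝ H]

/-- At the true change-point farthest from the change-points of `τh`, a window of
`min (d∞ τs τh) τs.minLen` indices on each side lies in a single segment of `τh`. -/
theorem IsTrueSeg.min_dinf1_minLen_mul_sq_le (hτ : IsTrueSeg τs μ) (hD : 2 ≤ τs.D)
    (hDh : τh.D = τs.D) :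
    (min (Seg.dinf1 τs τh) τs.minLen : ℕ) * deltaMin τs μ ^ 2 / 2
      ≤ hnorm2 (μ - τh.proj μ) := by
  obtain ⟨k, hk0, hkD, hfar⟩ := Seg.exists_dinf1_le hD (hDh ▸ hD)
  set m := min (Seg.dinf1 τs τh) τs.minLen
  have hmL : m ≤ τs.minLen := min_le_right _ _
  have hcm : τs.t k + m ≤ n := by
    have := hmL.trans (τs.minLen_le_len hkD)
    have := τs.t_le_n (a := k + 1) hkD
    have := τs.hmono k hkD
    rw [Seg.len] at *
    omega
  obtain ⟨ℓ, hℓ, hwin⟩ := τh.exists_finIco_subset_seg (τs.t_lt_n hkD) hcm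
    fun j hj0 hj => (min_le_left _ _).trans (hfar j hj0 (hDh ▸ hj))
  calc (m : ℝ) * deltaMin τs μ ^ 2 / 2
      ≤ m * ‖segVal τs μ (k - 1) - segVal τs μ k‖ ^ 2 / 2 := by
        gcongr
        · exact (hτ.deltaMin_pos hD).le
        · rw [norm_sub_rev, ← hτ.jumpAt_eq hk0 hkD]
          exact deltaMin_le_jumpAt hD hk0 hkD
    _ ≤ hnorm2 (μ - τh.proj μ) := hτ.mul_norm_segVal_sub_sq_div_two_le hk0 hkD hmL
        fun i hi => τh.proj_apply_of_mem_seg μ hℓ (hwin hi)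

end LowerBound

lemma div_le_rate_of_min_mul_sq_le {d L n D Δ q M V y δ : ℝ} (hn : 0 < n) (hD : 0 < D)
    (hq : 0 < q) (hqΔ : q ≤ Δ) (hV : 0 < V) (hy : 0 < y) (hδ : 0 < δ) (hM0 : 0 ≤ M)
    (hM : M ≤ y * √(n * V))
    (h : min d L * q ^ 2 / 2 ≤ 8 * D ^ 2 * Δ * M + D * (2 * M) ^ 2 / (n * δ))
    (hv : 24 * D ^ 2 * (Δ * √V / q ^ 2) * (y / √n) + 8 * D * (V / q ^ 2) * (y ^ 2 / (n * δ))
      ≤ L / n) :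
    d / n ≤ 24 * D ^ 2 * (Δ * √V / q ^ 2) * (y / √n) + 8 * D * (V / q ^ 2) * (y ^ 2 / (n * δ)) := by
  obtain ⟨s, hs, rfl⟩ : ∃ s, 0 < s ∧ n = s ^ 2 := ⟨√n, by positivity, (Real.sq_sqrt hn.le).symm⟩
  obtain ⟨v, hv0, rfl⟩ : ∃ v, 0 < v ∧ V = v ^ 2 := ⟨√V, by positivity, (Real.sq_sqrt hV.le).symm⟩
  rw [Real.sqrt_sq hs.le, Real.sqrt_sq hv0.le, Real.sqrt_mul (sq_nonneg s), Real.sqrt_sq hs.le,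
    Real.sqrt_sq hv0.le] at *
  have hΔ : 0 < Δ := hq.trans_le hqΔ
  set R := 24 * D ^ 2 * (Δ * v / q ^ 2) * (y / s) + 8 * D * (v ^ 2 / q ^ 2) * (y ^ 2 / (s ^ 2 * δ))
  have hR : s ^ 2 * R * q ^ 2 = 24 * D ^ 2 * Δ * y * s * v + 8 * (D * v ^ 2 * y ^ 2 / δ) := by
    simp only [R]; field_simp
  have hnoise : D * (2 * M) ^ 2 / (s ^ 2 * δ) ≤ 4 * (D * v ^ 2 * y ^ 2 / δ) := by
    rw [← mul_div_assoc, div_le_div_iff₀ (by positivity) hδ]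
    have : M ^ 2 ≤ (y * (s * v)) ^ 2 := pow_le_pow_left₀ hM0 hM 2
    nlinarith [mul_pos hD hδ]
  have hcross : 8 * D ^ 2 * Δ * M ≤ 8 * D ^ 2 * Δ * y * s * v :=
    (mul_le_mul_of_nonneg_left hM (by positivity)).trans_eq (by ring)
  have hgap : 0 < 8 * D ^ 2 * Δ * y * s * v := by positivity
  have hmin : min d L < s ^ 2 * R := by
    rw [← mul_lt_mul_iff_of_pos_right (pow_pos hq 2), hR]
    linarith
  have hL : s ^ 2 * R ≤ L := by rwa [le_div_iff₀ (by positivity), mul_comm] at hv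
  rw [div_le_iff₀ (by positivity), mul_comm]
  exact ((min_lt_iff.1 hmin).resolve_right (not_lt.2 hL)).le

section FirstPassage

variable {Ω : Type*} (f : ℕ → Ω → ℝ) (c : ℝ)

def firstPassage (k : ℕ) : Set Ω := f k ⁻¹' Set.Ioi c ∩ ⋂ j ∈ Set.Iio k, f j ⁻¹' Set.Iic c

lemma pairwiseDisjoint_firstPassage (s : Set ℕ) : s.PairwiseDisjoint (firstPassage f c) := by
  refine ((pairwise_disjoint_on _).2 fun a b hab => ?_).set_pairwise s
  refine Set.disjoint_left.2 fun ω ha hb => not_le.2 (show c < f a ω from ha.1) ?_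
  simp only [firstPassage, Set.mem_inter_iff, Set.mem_iInter] at hb
  exact hb.2 a hab

lemma mem_biUnion_firstPassage {N : ℕ} {ω : Ω} (h : ∃ k ≤ N, c < f k ω) :
    ω ∈ ⋃ k ∈ range (N + 1), firstPassage f c k := by
  obtain ⟨k, hkN, hk⟩ := h
  have hex : ∃ k, c < f k ω := ⟨k, hk⟩
  refine Set.mem_biUnion (x := Nat.find hex) ?_ ⟨Nat.find_spec hex, ?_⟩
  · have := Nat.find_min' hex hk
    simp only [coe_range, Set.mem_Iio]
    omega
  · simp only [Set.mem_iInter]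
    exact fun j hj => not_lt.1 (Nat.find_min hex hj)

lemma measurableSet_firstPassage {m : MeasurableSpace Ω} {k : ℕ}
    (hf : ∀ j ≤ k, Measurable[m] (f j)) : MeasurableSet[m] (firstPassage f c k) :=
  (hf k le_rfl measurableSet_Ioi).inter <| MeasurableSet.biInter (Set.to_countable _)
    fun j hj => hf j (le_of_lt hj) measurableSet_Iic

end FirstPassage

section Measurability

variable {Ω H : Type*} [NormedAddCommGroup H] [MeasurableSpace H] [BorelSpace H]
  [SecondCountableTopology H]

lemma measurable_sum_iSup_comap {ι : Type*} {ε : ι → Ω → H}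
    {s : Set ι} {t : Finset ι} (hts : ∀ i ∈ t, i ∈ s) :
    Measurable[⨆ i ∈ s, MeasurableSpace.comap (ε i) inferInstance] fun ω => ∑ i ∈ t, ε i ω :=
  Finset.measurable_fun_sum _ fun i hi => Measurable.of_comap_le <|
    le_iSup₂_of_le (f := fun i _ => MeasurableSpace.comap (ε i) inferInstance) i (hts i hi) le_rfl

lemma measurable_Mmax [MeasurableSpace Ω] {n : ℕ} {ε : Fin n → Ω → H}
    (hmeas : ∀ i, Measurable (ε i)) : Measurable fun ω => Mmax (ε · ω) :=
  Finset.measurable_range_sup'' fun _ _ => (Finset.measurable_fun_sum _ fun i _ => hmeas i).norm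

end Measurability

section Kolmogorov

variable {Ω : Type*} [MeasurableSpace Ω] {P : Measure Ω}

lemma indepFun_of_measurable_iSup {ι : Type*} {β : ι → Type*} [∀ i, MeasurableSpace (β i)]
    {f : ∀ i, Ω → β i} (hf : iIndepFun f P) (hmeas : ∀ i, Measurable (f i)) {s t : Set ι}
    (hst : Disjoint s t) {E F : Type*} [MeasurableSpace E] [MeasurableSpace F]
    {X : Ω → E} {Z : Ω → F}
    (hX : Measurable[⨆ i ∈ s, MeasurableSpace.comap (f i) inferInstance] X)
    (hZ : Measurable[⨆ i ∈ t, MeasurableSpace.comap (f i) inferInstance] Z) :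
    IndepFun X Z P :=
  (IndepFun_iff_Indep X Z P).2 <| indep_of_indep_of_le
    (indep_iSup_of_disjoint (fun i => (hmeas i).comap_le) ((iIndepFun_iff_iIndep _ _ _).1 hf)
      hst) hX.comap_le hZ.comap_le

variable {H : Type*} [NormedAddCommGroup H] [InnerProductSpace ℝ H]

theorem MeasureTheory.MemLp.integrable_inner {f g : Ω → H} (hf : MemLp f 2 P)
    (hg : MemLp g 2 P) : Integrable (fun ω => ⟪f ω, g ω⟫) P :=
  memLp_one_iff_integrable.mp <| hf.of_bilin (fun x y => ⟪x, y⟫) 1 hg (hf.1.inner hg.1)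
    (ae_of_all _ fun ω => by simpa using nnnorm_inner_le_nnnorm (𝕜 := ℝ) (f ω) (g ω))

variable [MeasurableSpace H] [BorelSpace H] [CompleteSpace H]

lemma integral_inner_eq_zero_of_indepFun {X Z : Ω → H} (h : IndepFun X Z P)
    (hX : Integrable X P) (hZ : Integrable Z P) (hZ0 : P[Z] = 0) :
    ∫ ω, ⟪X ω, Z ω⟫ ∂P = 0 := by
  have h' := h.integral_bilin hX hZ (innerSL ℝ)
  rw [hZ0, map_zero] at h'
  exact h'

variable [IsFiniteMeasure P]

lemma integral_norm_sum_sq {ι : Type*} (s : Finset ι) {ε : ι → Ω → H}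
    (hL2 : ∀ i, MemLp (ε i) 2 P) (hindep : Pairwise fun i j => IndepFun (ε i) (ε j) P)
    (hzero : ∀ i, P[ε i] = 0) :
    ∫ ω, ‖∑ i ∈ s, ε i ω‖ ^ 2 ∂P = ∑ i ∈ s, ∫ ω, ‖ε i ω‖ ^ 2 ∂P := by
  have hint i j : Integrable (fun ω => ⟪ε i ω, ε j ω⟫) P := (hL2 i).integrable_inner (hL2 j)
  calc ∫ ω, ‖∑ i ∈ s, ε i ω‖ ^ 2 ∂P = ∑ i ∈ s, ∑ j ∈ s, ∫ ω, ⟪ε i ω, ε j ω⟫ ∂P := by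
        simp_rw [← real_inner_self_eq_norm_sq, sum_inner, inner_sum]
        rw [integral_finsetSum _ fun i _ => integrable_finsetSum _ fun j _ => hint i j]
        exact sum_congr rfl fun i _ => integral_finsetSum _ fun j _ => hint i j
    _ = ∑ i ∈ s, ∫ ω, ⟪ε i ω, ε i ω⟫ ∂P :=
        sum_congr rfl fun i hi => sum_eq_single_of_mem i hi fun j _ hji =>
          integral_inner_eq_zero_of_indepFun (hindep hji.symm)
            ((hL2 i).integrable one_le_two) ((hL2 j).integrable one_le_two) (hzero j)
    _ = ∑ i ∈ s, ∫ ω, ‖ε i ω‖ ^ 2 ∂P := by simp_rw [real_inner_self_eq_norm_sq]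

lemma setIntegral_norm_sq_le_norm_add_sq {X Z : Ω → H} {A : Set Ω} (hA : MeasurableSet A)
    (hXZ : IndepFun (A.indicator X) Z P) (hX : MemLp X 2 P) (hZ : MemLp Z 2 P)
    (hZ0 : P[Z] = 0) :
    ∫ ω in A, ‖X ω‖ ^ 2 ∂P ≤ ∫ ω in A, ‖X ω + Z ω‖ ^ 2 ∂P := by
  have hcross : ∫ ω in A, ⟪X ω, Z ω⟫ ∂P = 0 := by
    rw [← integral_indicator hA, ← integral_inner_eq_zero_of_indepFun hXZ
      ((hX.integrable one_le_two).indicator hA) (hZ.integrable one_le_two) hZ0]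
    congr with ω
    by_cases hω : ω ∈ A <;> simp [hω]
  have hexpand ω : ‖X ω + Z ω‖ ^ 2 = ‖X ω‖ ^ 2 + (2 * ⟪X ω, Z ω⟫ + ‖Z ω‖ ^ 2) := by
    rw [norm_add_sq_real]; ring
  have hXZint := (hX.integrable_inner hZ).const_mul 2
  have hX2 : Integrable (fun ω => ‖X ω‖ ^ 2) P := hX.integrable_norm_pow two_ne_zero
  have hZ2 : Integrable (fun ω => ‖Z ω‖ ^ 2) P := hZ.integrable_norm_pow two_ne_zero
  simp_rw [hexpand]
  rw [integral_add (g := fun ω => 2 * ⟪X ω, Z ω⟫ + ‖Z ω‖ ^ 2)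
      hX2.integrableOn (hXZint.fun_add hZ2).integrableOn,
    integral_add (g := fun ω => ‖Z ω‖ ^ 2) hXZint.integrableOn hZ2.integrableOn,
    integral_const_mul, hcross]
  linarith [setIntegral_nonneg (μ := P) hA fun ω _ => sq_nonneg ‖Z ω‖]

variable [SecondCountableTopology H] {n : ℕ} {ε : Fin n → Ω → H}

/-- The key step of Kolmogorov's inequality: on an event determined by `ε_0, …, ε_{k-1}`, the
increment `ε_k + ⋯ + ε_{n-1}` is independent and centred, so it can only increase the second
moment. -/
lemma setIntegral_norm_partialSum_sq_le (hmeas : ∀ i, Measurable (ε i))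
    (hL2 : ∀ i, MemLp (ε i) 2 P) (hindep : iIndepFun ε P) (hzero : ∀ i, P[ε i] = 0) {k : ℕ}
    {A : Set Ω}
    (hA : MeasurableSet[⨆ i ∈ {i : Fin n | (i : ℕ) < k}, MeasurableSpace.comap (ε i)
      inferInstance] A) :
    ∫ ω in A, ‖partialSum (ε · ω) k‖ ^ 2 ∂P ≤ ∫ ω in A, ‖∑ i, ε i ω‖ ^ 2 ∂P := by
  set Z : Ω → H := fun ω => ∑ i ∈ univ.filter (fun i : Fin n => k ≤ (i : ℕ)), ε i ω
  have hZ0 : P[Z] = 0 := by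
    rw [integral_finsetSum _ fun i _ => (hL2 i).integrable one_le_two]
    exact sum_eq_zero fun i _ => hzero i
  have hS : Measurable[⨆ i ∈ {i : Fin n | (i : ℕ) < k}, MeasurableSpace.comap (ε i)
      inferInstance] fun ω => partialSum (ε · ω) k :=
    measurable_sum_iSup_comap fun i hi => by simpa using hi
  have hZ : Measurable[⨆ i ∈ {i : Fin n | k ≤ (i : ℕ)}, MeasurableSpace.comap (ε i)
      inferInstance] Z :=
    measurable_sum_iSup_comap fun i hi => by simpa using hi
  have hindep_k : IndepFun (A.indicator fun ω => partialSum (ε · ω) k) Z P :=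
    indepFun_of_measurable_iSup hindep hmeas
      (Set.disjoint_left.2 fun i (hi : (i : ℕ) < k) (hi' : k ≤ (i : ℕ)) => by omega)
      (hS.indicator hA) hZ
  have hA_meas : MeasurableSet A :=
    (iSup₂_le fun i _ => (hmeas i).comap_le : _ ≤ ‹MeasurableSpace Ω›) _ hA
  calc ∫ ω in A, ‖partialSum (ε · ω) k‖ ^ 2 ∂P
      ≤ ∫ ω in A, ‖partialSum (ε · ω) k + Z ω‖ ^ 2 ∂P :=
        setIntegral_norm_sq_le_norm_add_sq hA_meas hindep_k
          (memLp_finsetSum _ fun i _ => hL2 i) (memLp_finsetSum _ fun i _ => hL2 i) hZ0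
    _ = ∫ ω in A, ‖∑ i, ε i ω‖ ^ 2 ∂P := by simp only [Z, partialSum_add_sum_filter_le]

theorem kolmogorov_maximal_ineq (hmeas : ∀ i, Measurable (ε i)) (hL2 : ∀ i, MemLp (ε i) 2 P)
    (hindep : iIndepFun ε P) (hzero : ∀ i, P[ε i] = 0) {c : ℝ} (hc : 0 < c) :
    c ^ 2 * P.real {ω | c < Mmax (ε · ω)} ≤ ∑ i, ∫ ω, ‖ε i ω‖ ^ 2 ∂P := by
  set S : ℕ → Ω → ℝ := fun k ω => ‖partialSum (ε · ω) k‖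
  set T : Ω → H := fun ω => ∑ i, ε i ω
  set A := firstPassage S c
  set past : ℕ → MeasurableSpace Ω := fun k =>
    ⨆ i ∈ {i : Fin n | (i : ℕ) < k}, MeasurableSpace.comap (ε i) inferInstance
  have hA_past k : MeasurableSet[past k] (A k) :=
    measurableSet_firstPassage S c fun j hjk => measurable_norm.comp <|
      measurable_sum_iSup_comap fun i hi => by
        simp only [mem_filter] at hi; simp only [Set.mem_ofPred_eq]; omega
  have hA_meas k : MeasurableSet (A k) :=
    (iSup₂_le fun i _ => (hmeas i).comap_le : past k ≤ ‹MeasurableSpace Ω›) _ (hA_past k)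
  have hT2 : Integrable (fun ω => ‖T ω‖ ^ 2) P :=
    (memLp_finsetSum _ fun i _ => hL2 i).integrable_norm_pow two_ne_zero
  have hcover : {ω | c < Mmax (ε · ω)} ⊆ ⋃ k ∈ range (n + 1), A k := fun ω hω => by
    obtain ⟨k, hk, hck⟩ := (lt_sup'_iff _).1 (show c < Mmax (ε · ω) from hω)
    exact mem_biUnion_firstPassage S c ⟨k, Nat.lt_succ_iff.1 (mem_range.1 hk), hck⟩
  have hstep k : c ^ 2 * P.real (A k) ≤ ∫ ω in A k, ‖T ω‖ ^ 2 ∂P :=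
    (setIntegral_ge_of_const_le_real (hA_meas k) (measure_ne_top _ _)
      (fun ω hω => pow_le_pow_left₀ hc.le (le_of_lt hω.1) 2)
      ((memLp_finsetSum _ fun i _ => hL2 i).integrable_norm_pow two_ne_zero).integrableOn).trans
    (setIntegral_norm_partialSum_sq_le hmeas hL2 hindep hzero (hA_past k))
  calc c ^ 2 * P.real {ω | c < Mmax (ε · ω)}
      ≤ c ^ 2 * ∑ k ∈ range (n + 1), P.real (A k) := by
        gcongr
        exact (measureReal_mono hcover (measure_ne_top _ _)).trans
          (measureReal_biUnion_finset_le _ _)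
    _ ≤ ∑ k ∈ range (n + 1), ∫ ω in A k, ‖T ω‖ ^ 2 ∂P := by
        rw [mul_sum]; exact sum_le_sum fun k _ => hstep k
    _ = ∫ ω in ⋃ k ∈ range (n + 1), A k, ‖T ω‖ ^ 2 ∂P :=
        (integral_biUnion_finset _ (fun k _ => hA_meas k) (pairwiseDisjoint_firstPassage S c _)
          fun k _ => hT2.integrableOn).symm
    _ ≤ ∫ ω, ‖T ω‖ ^ 2 ∂P :=
        setIntegral_le_integral hT2 (ae_of_all _ fun ω => sq_nonneg _)
    _ = ∑ i, ∫ ω, ‖ε i ω‖ ^ 2 ∂P :=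
        integral_norm_sum_sq _ hL2 (fun i j hij => hindep.indepFun hij) hzero

theorem one_sub_le_probReal_Mmax_le [IsProbabilityMeasure P] (hmeas : ∀ i, Measurable (ε i))
    (hL2 : ∀ i, MemLp (ε i) 2 P) (hindep : iIndepFun ε P) (hzero : ∀ i, P[ε i] = 0) {V : ℝ}
    (hvar : ∀ i, ∫ ω, ‖ε i ω‖ ^ 2 ∂P ≤ V) {c : ℝ} (hc : 0 < c) :
    1 - n * V / c ^ 2 ≤ P.real {ω | Mmax (ε · ω) ≤ c} := by
  have hK := kolmogorov_maximal_ineq hmeas hL2 hindep hzero hc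
  have hsum : ∑ i, ∫ ω, ‖ε i ω‖ ^ 2 ∂P ≤ n * V := by
    simpa using sum_le_card_nsmul univ _ V fun i _ => hvar i
  have hcompl : {ω | Mmax (ε · ω) ≤ c} = {ω | c < Mmax (ε · ω)}ᶜ := by
    ext ω; simp [not_lt]
  rw [hcompl, probReal_compl_eq_one_sub (measurableSet_lt measurable_const
    (measurable_Mmax hmeas)), sub_le_sub_iff_left, le_div_iff₀ (by positivity)]
  linarith

theorem one_sub_inv_sq_le_probReal_Mmax_sub_le [IsProbabilityMeasure P] {Y : Fin n → Ω → H}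
    (hYmeas : ∀ i, Measurable (Y i)) (hYint : ∀ i, Integrable (Y i) P) (hYindep : iIndepFun Y P)
    {μ : Fin n → H} (hμ : ∀ i, μ i = ∫ ω, Y i ω ∂P)
    (hL2 : ∀ i, Integrable (fun ω => ‖Y i ω - μ i‖ ^ 2) P) (hn : 0 < n) {V : ℝ} (hV : 0 < V)
    (hvar : ∀ i, ∫ ω, ‖Y i ω - μ i‖ ^ 2 ∂P ≤ V) {y : ℝ} (hy : 0 < y) :
    1 - 1 / y ^ 2 ≤ P.real {ω | Mmax (fun i => Y i ω - μ i) ≤ y * √(n * V)} := by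
  have hmeas i : Measurable fun ω => Y i ω - μ i := (hYmeas i).sub_const _
  have hnV : (0 : ℝ) < n * V := mul_pos (Nat.cast_pos.2 hn) hV
  have hprob := one_sub_le_probReal_Mmax_le hmeas
    (fun i => (memLp_two_iff_integrable_sq_norm (hmeas i).aestronglyMeasurable).2 (hL2 i))
    (hYindep.comp (fun i v => v - μ i) fun _ => measurable_id.sub_const _)
    (fun i => by simp [integral_sub (hYint i) (integrable_const _), hμ]) hvar
    (show 0 < y * √(n * V) by positivity)
  rwa [mul_pow, Real.sq_sqrt hnV.le, mul_comm (y ^ 2), ← div_div, div_self hnV.ne'] at hprob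

end Kolmogorov

theorem kcp_known_D_variance_general
    {H : Type*} [NormedAddCommGroup H] [InnerProductSpace ℝ H] [CompleteSpace H]
    [SecondCountableTopology H] [MeasurableSpace H] [BorelSpace H]
    {Ω : Type*} [MeasurableSpace Ω] (P : Measure Ω) [IsProbabilityMeasure P]
    {n : ℕ}
    (Y : Fin n → Ω → H) (hYmeas : ∀ i, Measurable (Y i))
    (hYint : ∀ i, Integrable (Y i) P)
    (hYindep : iIndepFun Y P)
    (μs : Fin n → H) (hμs : ∀ i, μs i = ∫ ω, Y i ω ∂P)
    (τs : Seg n) (hτs : IsTrueSeg τs μs) (hDs : 2 ≤ τs.D)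
    (V : ℝ) (hV : 0 < V)
    (hε2int : ∀ i, Integrable (fun ω => ‖Y i ω - μs i‖ ^ 2) P)
    (hvar : ∀ i, ∫ ω, ‖Y i ω - μs i‖ ^ 2 ∂P ≤ V)
    (y : ℝ) (hy : 0 < y) :
    ∃ E : Set Ω, MeasurableSet E ∧ 1 - 1 / y ^ 2 ≤ (P E).toReal ∧
      ∀ ω ∈ E, ∀ δ : ℝ, 0 < δ → δ ≤ Seg.lamMin τs →
        ∀ τh : Seg n, τh.D = τs.D → δ ≤ Seg.lamMin τh →
          (∀ τ : Seg n, τ.D = τs.D → δ ≤ Seg.lamMin τ →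
            (1 / n) * hnorm2 (fun i => Y i ω - Seg.proj τh (fun j => Y j ω) i)
              ≤ (1 / n) * hnorm2 (fun i => Y i ω - Seg.proj τ (fun j => Y j ω) i)) →
          24 * (τs.D : ℝ) ^ 2 * (deltaMax τs μs * Real.sqrt V / (deltaMin τs μs) ^ 2) * (y / Real.sqrt n) + 8 * (τs.D : ℝ) * (V / (deltaMin τs μs) ^ 2) * (y ^ 2 / (n * δ)) ≤ Seg.lamMin τs →
          (Seg.dinf1 τs τh : ℝ) / n ≤ 24 * (τs.D : ℝ) ^ 2 * (deltaMax τs μs * Real.sqrt V / (deltaMin τs μs) ^ 2) * (y / Real.sqrt n) + 8 * (τs.D : ℝ) * (V / (deltaMin τs μs) ^ 2) * (y ^ 2 / (n * δ)) := by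
  have hn : (0 : ℝ) < n := Nat.cast_pos.2 τs.n_pos
  refine ⟨{ω | Mmax (fun i => Y i ω - μs i) ≤ y * √(n * V)},
    measurableSet_le (measurable_Mmax fun i => (hYmeas i).sub_const _) measurable_const,
    one_sub_inv_sq_le_probReal_Mmax_sub_le hYmeas hYint hYindep hμs hε2int τs.n_pos hV hvar hy,
    fun ω hω δ hδ hδs τh hDh hδh hmin hv => ?_⟩
  have hrisk := le_of_mul_le_mul_left (hmin τs rfl hδs) (by positivity)
  have hupper := hτs.hnorm2_sub_proj_le_of_risk_le hDh (fun j => Y j ω) hδ hδh hrisk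
  have hlower := hτs.min_dinf1_minLen_mul_sq_le hDs hDh
  rw [Nat.cast_min] at hlower
  rw [Seg.lamMin_eq] at hv
  exact div_le_rate_of_min_mul_sq_le hn (Nat.cast_pos.2 τs.hD) (hτs.deltaMin_pos hDs)
    (deltaMin_le_deltaMax hDs) hV hy hδ (Mmax_nonneg _) hω (hlower.trans hupper) hv

/-- Theorem 3.4 (finite variance case): with probability at least `1 − 1/y²`, for any
`δ ∈ (0, Λ̲_{τ*}]` and any minimizer `τ̂` of the empirical risk over segmentations with
`D_{τ*}` segments and smallest segment of normalized length at least `δ`, if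
`v₂(y, δ) ≤ Λ̲_{τ*}` then `(1/n) d∞^{(1)}(τ*, τ̂) ≤ v₂(y, δ)`. -/
theorem kcp_known_D_variance
    {H : Type*} [NormedAddCommGroup H] [InnerProductSpace ℝ H] [CompleteSpace H]
    [SecondCountableTopology H] [MeasurableSpace H] [BorelSpace H]
    {Ω : Type*} [MeasurableSpace Ω] (P : Measure Ω) [IsProbabilityMeasure P]
    {n : ℕ} (hn : 2 ≤ n)
    (Y : Fin n → Ω → H) (hYmeas : ∀ i, Measurable (Y i))
    (hYint : ∀ i, Integrable (Y i) P)
    (hYindep : iIndepFun Y P)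
    (μs : Fin n → H) (hμs : ∀ i, μs i = ∫ ω, Y i ω ∂P)
    (τs : Seg n) (hτs : IsTrueSeg τs μs) (hDs : 2 ≤ τs.D)
    (V : ℝ) (hV : 0 < V)
    (hε2int : ∀ i, Integrable (fun ω => ‖Y i ω - μs i‖ ^ 2) P)
    (hvar : ∀ i, ∫ ω, ‖Y i ω - μs i‖ ^ 2 ∂P ≤ V)
    (y : ℝ) (hy : 0 < y) :
    ∃ E : Set Ω, MeasurableSet E ∧ 1 - 1 / y ^ 2 ≤ (P E).toReal ∧
      ∀ ω ∈ E, ∀ δ : ℝ, 0 < δ → δ ≤ Seg.lamMin τs →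
        ∀ τh : Seg n, τh.D = τs.D → δ ≤ Seg.lamMin τh →
          (∀ τ : Seg n, τ.D = τs.D → δ ≤ Seg.lamMin τ →
            (1 / n) * hnorm2 (fun i => Y i ω - Seg.proj τh (fun j => Y j ω) i)
              ≤ (1 / n) * hnorm2 (fun i => Y i ω - Seg.proj τ (fun j => Y j ω) i)) →
          24 * (τs.D : ℝ) ^ 2 * (deltaMax τs μs * Real.sqrt V / (deltaMin τs μs) ^ 2) * (y / Real.sqrt n) + 8 * (τs.D : ℝ) * (V / (deltaMin τs μs) ^ 2) * (y ^ 2 / (n * δ)) ≤ Seg.lamMin τs →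
          (Seg.dinf1 τs τh : ℝ) / n ≤ 24 * (τs.D : ℝ) ^ 2 * (deltaMax τs μs * Real.sqrt V / (deltaMin τs μs) ^ 2) * (y / Real.sqrt n) + 8 * (τs.D : ℝ) * (V / (deltaMin τs μs) ^ 2) * (y ^ 2 / (n * δ)) :=
  kcp_known_D_variance_general P Y hYmeas hYint hYindep μs hμs τs hτs hDs V hV hε2int hvar y hy
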